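/- Let C_n be the cycle on n ≥ 3 vertices and let X_{C_n} be the number of vertices with nonzero in-degree after a random orientation of the edges of C_n. Then H(X_{C_n}) ≥ H(Bin(n−1, 1/2)) − 1, where Bin(n−1, 1/2) is a binomial random variable with n−1 trials and success probability 1/2. -/

import Mathlib

open Finset

/-- Shannon entropy (base 2) of a random variable `X` defined on a finite sample space
with probability mass function `p`:  `H(X) = -∑_s P[X = s] log₂ P[X = s]`. -/
noncomputable def shannonEntropy {Ω S : Type*} [Fintype Ω] [DecidableEq S]
    (p : Ω → ℝ) (X : Ω → S) : ℝ :=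
  -∑ s ∈ Finset.univ.image X,
      (∑ ω ∈ Finset.univ.filter (fun ω => X ω = s), p ω) *
        Real.logb 2 (∑ ω ∈ Finset.univ.filter (fun ω => X ω = s), p ω)

/-- Shannon entropy (base 2) of a `Binomial(m, 1/2)` random variable, which takes each
value `k ∈ {0, …, m}` with probability `(m.choose k) / 2 ^ m`. -/
noncomputable def binomialEntropy (m : ℕ) : ℝ :=
  -∑ k ∈ Finset.range (m + 1),
      ((m.choose k : ℝ) / 2 ^ m) * Real.logb 2 ((m.choose k : ℝ) / 2 ^ m)

/-!
Encode an orientation of the cycle by `x : ZMod n → ZMod 2`, where `x i = 1` when the edge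
`{i, i + 1}` points to `i + 1`. A vertex `v` has in-degree zero exactly when `x` rises from `0`
to `1` between `v - 1` and `v`, and around the cycle there are as many rises as falls; so `n - X`
is half the number of changes of `x` around the cycle. Removing the edge `{-1, 0}` leaves a path,
whose number of changes `Y` is `Bin(n - 1, 1/2)`: `x` is determined by `x 0` and its `n - 1`
successive differences, which are therefore independent fair bits. The cycle count is even and
exceeds `Y` by at most one, hence `X = n - ⌈Y / 2⌉`. Thus `Y` is determined by `X` up to two
choices, and `H(Y) ≤ H(X) + 1`.
-/

open Real

section Entropy

variable {Ω S T : Type*} [Fintype Ω] [DecidableEq S] [DecidableEq T]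

def fiberMass (p : Ω → ℝ) (Z : Ω → S) (s : S) : ℝ :=
  ∑ ω ∈ univ.filter (fun ω => Z ω = s), p ω

lemma shannonEntropy_eq_sum_negMulLog (p : Ω → ℝ) (Z : Ω → S) :
    shannonEntropy p Z = (∑ s ∈ univ.image Z, negMulLog (fiberMass p Z s)) / log 2 := by
  simp only [shannonEntropy, negMulLog, logb, neg_mul, sum_neg_distrib, neg_div,
    sum_div, fiberMass, mul_div_assoc]

lemma fiberMass_const (c : ℝ) (Z : Ω → S) (s : S) :
    fiberMass (fun _ => c) Z s = #{ω | Z ω = s} * c := by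
  rw [fiberMass, sum_const, nsmul_eq_mul]

lemma sum_image_fiberMass (p : Ω → ℝ) (Z : Ω → S) :
    ∑ s ∈ univ.image Z, fiberMass p Z s = ∑ ω, p ω :=
  sum_fiberwise_of_maps_to (fun ω _ => mem_image_of_mem Z (mem_univ ω)) p

lemma fiberMass_comp (p : Ω → ℝ) (Z : Ω → S) (f : S → T) (t : T) :
    fiberMass p (f ∘ Z) t = ∑ s ∈ (univ.image Z).filter (f · = t), fiberMass p Z s := by
  rw [fiberMass]
  simp only [Function.comp_apply]
  rw [← sum_fiberwise_of_maps_to (g := Z)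
    (t := (univ.image Z).filter (f · = t))
    (fun ω hω => mem_filter.2 ⟨mem_image_of_mem Z (mem_univ ω), (mem_filter.1 hω).2⟩)]
  refine sum_congr rfl fun s hs => ?_
  rw [fiberMass, filter_filter]
  refine sum_congr (filter_congr fun ω _ => ?_) fun _ _ => rfl
  exact ⟨And.right, fun h => ⟨h ▸ (mem_filter.mp hs).2, h⟩⟩

lemma negMulLog_add_negMulLog_le (a b : ℝ) (ha : 0 ≤ a) (hb : 0 ≤ b) :
    negMulLog a + negMulLog b ≤ negMulLog (a + b) + (a + b) * log 2 := by
  have hmid := concaveOn_negMulLog.2 (Set.mem_Ici.2 ha) (Set.mem_Ici.2 hb)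
    (by norm_num : (0 : ℝ) ≤ 2⁻¹) (by norm_num : (0 : ℝ) ≤ 2⁻¹) (by norm_num)
  have hhalf : negMulLog ((a + b) * 2⁻¹) = 2⁻¹ * (negMulLog (a + b) + (a + b) * log 2) := by
    rw [negMulLog_mul]
    simp only [negMulLog, log_inv]
    ring
  simp only [smul_eq_mul] at hmid
  rw [← mul_add, ← mul_add, mul_comm _ (a + b), hhalf] at hmid
  linarith

lemma sum_negMulLog_le_of_card_le_two (G : Finset S) (hG : G.card ≤ 2) (q : S → ℝ)
    (hq : ∀ s ∈ G, 0 ≤ q s) :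
    ∑ s ∈ G, negMulLog (q s) ≤ negMulLog (∑ s ∈ G, q s) + (∑ s ∈ G, q s) * log 2 := by
  interval_cases h : G.card
  · simp [card_eq_zero.mp h]
  · obtain ⟨a, rfl⟩ := card_eq_one.mp h
    simpa using mul_nonneg (hq a (mem_singleton_self a)) (log_nonneg one_le_two)
  · obtain ⟨a, b, hab, rfl⟩ := card_eq_two.mp h
    simpa [sum_pair hab] using negMulLog_add_negMulLog_le _ _ (hq a (by simp)) (hq b (by simp))

lemma shannonEntropy_le_shannonEntropy_comp_add_one (p : Ω → ℝ) (hp : ∀ ω, 0 ≤ p ω)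
    (hp₁ : ∑ ω, p ω = 1) (Z : Ω → S) (f : S → T)
    (hf : ∀ t, ((univ.image Z).filter (f · = t)).card ≤ 2) :
    shannonEntropy p Z ≤ shannonEntropy p (f ∘ Z) + 1 := by
  have hlog : 0 < log 2 := log_pos one_lt_two
  have himage : univ.image (f ∘ Z) = (univ.image Z).image f := by
    rw [image_image]
  suffices ∑ s ∈ univ.image Z, negMulLog (fiberMass p Z s) ≤
      ∑ t ∈ univ.image (f ∘ Z), negMulLog (fiberMass p (f ∘ Z) t) + log 2 by
    rw [shannonEntropy_eq_sum_negMulLog, shannonEntropy_eq_sum_negMulLog,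
      div_le_iff₀ hlog, add_mul, div_mul_cancel₀ _ hlog.ne']
    linarith
  calc ∑ s ∈ univ.image Z, negMulLog (fiberMass p Z s)
      = ∑ t ∈ univ.image (f ∘ Z), ∑ s ∈ (univ.image Z).filter (f · = t),
          negMulLog (fiberMass p Z s) :=
        (sum_fiberwise_of_maps_to (fun s hs => himage ▸ mem_image_of_mem f hs) _).symm
    _ ≤ ∑ t ∈ univ.image (f ∘ Z),
          (negMulLog (fiberMass p (f ∘ Z) t) + fiberMass p (f ∘ Z) t * log 2) := by
        refine sum_le_sum fun t _ => ?_
        rw [fiberMass_comp]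
        exact sum_negMulLog_le_of_card_le_two _ (hf t) _
          fun s _ => sum_nonneg fun ω _ => hp ω
    _ = ∑ t ∈ univ.image (f ∘ Z), negMulLog (fiberMass p (f ∘ Z) t) + log 2 := by
        rw [sum_add_distrib, ← sum_mul, sum_image_fiberMass, hp₁, one_mul]

lemma shannonEntropy_eq_of_fiberMass (p : Ω → ℝ) (Z : Ω → S) (A : Finset S)
    (hZ : ∀ ω, Z ω ∈ A) (q : S → ℝ) (hq : ∀ s ∈ A, fiberMass p Z s = q s) :
    shannonEntropy p Z = -∑ s ∈ A, q s * logb 2 (q s) := by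
  have hsub : univ.image Z ⊆ A := fun s hs => by
    obtain ⟨ω, -, rfl⟩ := mem_image.mp hs
    exact hZ ω
  rw [shannonEntropy, neg_inj]
  refine sum_subset_zero_on_sdiff hsub ?_ ?_
  · intro s hs
    obtain ⟨hsA, hsZ⟩ := mem_sdiff.mp hs
    have hempty : univ.filter (fun ω => Z ω = s) = ∅ :=
      filter_false_of_mem fun ω _ hω => hsZ (hω ▸ mem_image_of_mem Z (mem_univ ω))
    rw [← hq s hsA, fiberMass, hempty, sum_empty, zero_mul]
  · intro s hs
    rw [← hq s (hsub hs)]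
    rfl

end Entropy

section Changes

variable {α : Type*} [Fintype α]

lemma card_ne_comp_perm_eq_two_mul (σ : Equiv.Perm α) (x : α → ZMod 2) :
    #{i | x i ≠ x (σ i)} = 2 * #{i | x i = 0 ∧ x (σ i) = 1} := by
  have hpoint : ∀ a b : ZMod 2, ((if a ≠ b then 1 else 0 : ℕ) : ℤ) =
      2 * (if a = 0 ∧ b = 1 then 1 else 0 : ℕ) + (a.val - b.val) := by decide
  have hshift : ∑ i, ((x (σ i)).val : ℤ) = ∑ i, ((x i).val : ℤ) :=
    Equiv.sum_comp σ fun i => ((x i).val : ℤ)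
  zify
  simp only [card_filter, Nat.cast_sum, hpoint, sum_add_distrib, ← mul_sum,
    sum_sub_distrib, hshift, sub_self, add_zero]

variable {R G : Type*} [AddGroup R] [One R] [Fintype R] [DecidableEq R] [DecidableEq G]

def cycleChanges (x : R → G) : ℕ := #{i | x i ≠ x (i + 1)}

def pathChanges (x : R → G) : ℕ := #{i | i + 1 ≠ 0 ∧ x i ≠ x (i + 1)}

def rises (x : R → ZMod 2) : ℕ := #{i | x i = 0 ∧ x (i + 1) = 1}

lemma pathChanges_le_cycleChanges (x : R → G) : pathChanges x ≤ cycleChanges x :=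
  card_le_card fun i hi => by
    simp only [mem_filter] at hi ⊢
    exact ⟨hi.1, hi.2.2⟩

lemma cycleChanges_le_pathChanges_add_one (x : R → G) : cycleChanges x ≤ pathChanges x + 1 := by
  refine (card_le_card fun i hi => ?_).trans (card_insert_le (-1) _)
  rw [mem_insert, mem_filter]
  by_cases h : i + 1 = 0
  · exact Or.inl (eq_neg_of_add_eq_zero_left h)
  · exact Or.inr ⟨mem_univ i, h, (mem_filter.mp hi).2⟩

lemma rises_eq (x : R → ZMod 2) : rises x = (pathChanges x + 1) / 2 := by
  have htwo : cycleChanges x = 2 * rises x := card_ne_comp_perm_eq_two_mul (Equiv.addRight 1) x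
  have := pathChanges_le_cycleChanges x
  have := cycleChanges_le_pathChanges_add_one x
  omega

lemma pathChanges_lt_card (x : R → G) : pathChanges x < Fintype.card R :=
  card_lt_card (filter_ssubset.2 ⟨-1, mem_univ _, by simp⟩)

lemma pathChanges_comp_addEquiv {S : Type*} [AddGroup S] [One S] [Fintype S] [DecidableEq S]
    (e : R ≃+ S) (he : e 1 = 1) (x : S → G) : pathChanges (x ∘ e) = pathChanges x := by
  refine card_equiv e.toEquiv fun i => ?_
  have hzero : e i + 1 = 0 ↔ i + 1 = 0 := by
    rw [← he, ← map_add, map_eq_zero_iff e e.injective]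
  simp [map_add, he, hzero]

end Changes

section PathCount

lemma ZMod.eq_one_of_ne_zero_of_two {a : ZMod 2} (ha : a ≠ 0) : a = 1 := by
  revert a; decide

def finDiffEquiv (G : Type*) [AddGroup G] (m : ℕ) :
    (Fin (m + 1) → G) ≃ G × (Fin m → G) where
  toFun y := (y 0, fun j => -y j.castSucc + y j.succ)
  invFun cd i := cd.1 + Fin.partialSum cd.2 i
  left_inv y := Fin.partialSum_left_neg y
  right_inv cd := by
    ext j
    · simp
    · simp only [neg_add_rev, add_assoc, neg_add_cancel_left, Fin.partialSum_right_neg]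

lemma card_filter_card_ne_zero_eq_choose {ι : Type*} [Fintype ι] [DecidableEq ι] (k : ℕ) :
    #{d : ι → ZMod 2 | #{i | d i ≠ 0} = k} = (Fintype.card ι).choose k := by
  rw [← card_univ, ← card_powersetCard]
  refine card_nbij' (fun d => ({i | d i ≠ 0} : Finset ι)) (fun s i => if i ∈ s then 1 else 0)
    ?_ ?_ ?_ ?_
  · intro d hd
    simpa using hd
  · intro s hs
    simpa using hs
  · intro d _
    funext i
    rcases eq_or_ne (d i) 0 with h | h
    · simp [h]
    · simp [ZMod.eq_one_of_ne_zero_of_two h]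
  · intro s _
    ext i
    simp

lemma pathChanges_eq_card_diff_ne_zero {G : Type*} [AddGroup G] [DecidableEq G] {m : ℕ}
    (y : Fin (m + 1) → G) : pathChanges y = #{j | (finDiffEquiv G m y).2 j ≠ 0} := by
  simp only [pathChanges, finDiffEquiv, Equiv.coe_fn_mk, ne_eq, neg_add_eq_zero, card_filter,
    Fin.sum_univ_castSucc, Fin.coeSucc_eq_succ, Fin.succ_ne_zero, Fin.last_add_one]
  simp

lemma card_pathChanges_fin (m k : ℕ) :
    #{y : Fin (m + 1) → ZMod 2 | pathChanges y = k} = 2 * m.choose k := by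
  simp_rw [pathChanges_eq_card_diff_ne_zero]
  rw [card_equiv (finDiffEquiv (ZMod 2) m)
    (t := univ ×ˢ univ.filter fun d : Fin m → ZMod 2 => #{j | d j ≠ 0} = k)
    (by simp), card_product, card_filter_card_ne_zero_eq_choose]
  simp

lemma card_pathChanges_zmod (n : ℕ) [NeZero n] (k : ℕ) :
    #{x : ZMod n → ZMod 2 | pathChanges x = k} = 2 * (n - 1).choose k := by
  obtain ⟨m, rfl⟩ := Nat.exists_eq_add_one_of_ne_zero (NeZero.ne n)
  rw [← card_pathChanges_fin, Nat.add_sub_cancel]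
  refine (card_equiv ((ZMod.finEquiv (m + 1)).toEquiv.arrowCongr (Equiv.refl _)) ?_).symm
  intro x
  have := pathChanges_comp_addEquiv (ZMod.finEquiv (m + 1)).symm.toAddEquiv
    (map_one (ZMod.finEquiv (m + 1)).symm) x
  simp only [mem_filter, mem_univ, true_and]
  rw [← this]
  rfl

end PathCount

section Orientation

abbrev CycleOrientation (R : Type*) [Add R] [One R] :=
  {g : R → R // ∀ i, g i = i ∨ g i = i + 1}

variable {R : Type*} [AddGroup R] [One R] [NeZero (1 : R)]

lemma CycleOrientation.not_exists_apply_eq_iff (g : CycleOrientation R) (v : R) :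
    (¬∃ i, g.1 i = v) ↔ g.1 (v - 1) = v - 1 ∧ g.1 v ≠ v := by
  constructor
  · intro h
    refine ⟨(g.2 (v - 1)).resolve_right fun h' => h ⟨v - 1, by rw [h', sub_add_cancel]⟩,
      fun h' => h ⟨v, h'⟩⟩
  · rintro ⟨hprev, hv⟩ ⟨i, rfl⟩
    rcases g.2 i with h | h
    · exact hv (by rw [h, h])
    · have : i = g.1 i - 1 := by rw [h, add_sub_cancel_right]
      rw [← this] at hprev
      exact absurd (h.symm.trans hprev) (by simp)

variable [DecidableEq R]

def cycleOrientationEquiv : CycleOrientation R ≃ (R → ZMod 2) where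
  toFun g i := if g.1 i = i then 0 else 1
  invFun x := ⟨fun i => if x i = 0 then i else i + 1,
    fun i => by by_cases h : x i = 0 <;> simp [h]⟩
  left_inv g := Subtype.ext <| funext fun i => by rcases g.2 i with h | h <;> simp [h]
  right_inv x := funext fun i => by
    rcases eq_or_ne (x i) 0 with h | h
    · simp [h]
    · simp [ZMod.eq_one_of_ne_zero_of_two h]

lemma cycleOrientationEquiv_apply_eq_zero_iff (g : CycleOrientation R) (i : R) :
    cycleOrientationEquiv g i = 0 ↔ g.1 i = i := by
  simp [cycleOrientationEquiv]

lemma cycleOrientationEquiv_apply_eq_one_iff (g : CycleOrientation R) (i : R) :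
    cycleOrientationEquiv g i = 1 ↔ g.1 i ≠ i := by
  simp [cycleOrientationEquiv]

variable [Fintype R]

lemma card_cycleOrientation : Fintype.card (CycleOrientation R) = 2 ^ Fintype.card R := by
  rw [Fintype.card_congr cycleOrientationEquiv, Fintype.card_fun, ZMod.card]

lemma CycleOrientation.card_not_exists_apply_eq (g : CycleOrientation R) :
    #{v | ¬∃ i, g.1 i = v} = rises (cycleOrientationEquiv g) :=
  card_equiv (Equiv.subRight 1) fun v => by
    simp only [mem_filter, mem_univ, true_and, Equiv.subRight_apply, not_exists_apply_eq_iff,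
      cycleOrientationEquiv_apply_eq_zero_iff, cycleOrientationEquiv_apply_eq_one_iff,
      sub_add_cancel]

lemma CycleOrientation.card_exists_apply_eq (g : CycleOrientation R) :
    #{v | ∃ i, g.1 i = v} = Fintype.card R - (pathChanges (cycleOrientationEquiv g) + 1) / 2 := by
  have := card_filter_add_card_filter_not (s := univ) fun v => ∃ i, g.1 i = v
  rw [card_not_exists_apply_eq, rises_eq, card_univ] at this
  omega

end Orientation

lemma shannonEntropy_pathChanges_cycleOrientationEquiv (n : ℕ) [Fact (1 < n)] :
    shannonEntropy (fun _ : CycleOrientation (ZMod n) => (1 : ℝ) / 2 ^ n)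
      (pathChanges ∘ cycleOrientationEquiv) = binomialEntropy (n - 1) := by
  have hn : 1 < n := Fact.out
  refine shannonEntropy_eq_of_fiberMass _ _ (range (n - 1 + 1)) (fun g => mem_range.2 ?_) _
    fun k _ => ?_
  · have := ZMod.card n ▸ pathChanges_lt_card (cycleOrientationEquiv g)
    simp only [Function.comp_apply]
    omega
  · rw [fiberMass_const, card_equiv cycleOrientationEquiv (t := {x | pathChanges x = k})
      (by simp), card_pathChanges_zmod, pow_sub₀ _ two_ne_zero hn.le]
    push_cast
    ring

lemma card_filter_sub_div_two_eq_le_two {n : ℕ} (A : Finset ℕ) (hA : ∀ y ∈ A, y < 2 * n)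
    (t : ℕ) : #{y ∈ A | n - (y + 1) / 2 = t} ≤ 2 := by
  refine (card_le_card fun y hy => ?_).trans
    (card_le_two (a := 2 * (n - t) - 1) (b := 2 * (n - t)))
  obtain ⟨hyA, ht⟩ := mem_filter.1 hy
  have := hA y hyA
  simp only [mem_insert, mem_singleton]
  omega

theorem cycle_entropy_ge_binomial (n : ℕ) [NeZero n] (hn : 3 ≤ n) :
    shannonEntropy
        (fun _ : {g : ZMod n → ZMod n // ∀ i, g i = i ∨ g i = i + 1} =>
          (1 : ℝ) / 2 ^ n)
        (fun g => (Finset.univ.filter fun v : ZMod n => ∃ i, g.1 i = v).card) ≥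
      binomialEntropy (n - 1) - 1 := by
  have : Fact (1 < n) := ⟨by omega⟩
  have hX : (fun g : CycleOrientation (ZMod n) => #{v | ∃ i, g.1 i = v}) =
      (fun y => n - (y + 1) / 2) ∘ pathChanges ∘ cycleOrientationEquiv :=
    funext fun g => by
      rw [Function.comp_apply, CycleOrientation.card_exists_apply_eq, ZMod.card]
      rfl
  have hfib := card_filter_sub_div_two_eq_le_two (n := n)
    (univ.image (pathChanges ∘ cycleOrientationEquiv)) fun y hy => by
      obtain ⟨g, -, rfl⟩ := mem_image.1 hy
      have := ZMod.card n ▸ pathChanges_lt_card (cycleOrientationEquiv g)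
      simp only [Function.comp_apply]
      omega
  have hp₁ : ∑ _g : CycleOrientation (ZMod n), (1 : ℝ) / 2 ^ n = 1 := by
    simp [card_cycleOrientation]
  have hH := shannonEntropy_le_shannonEntropy_comp_add_one _ (fun _ => by positivity) hp₁ _ _ hfib
  rw [hX, ge_iff_le, ← shannonEntropy_pathChanges_cycleOrientationEquiv]
  linarith
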